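/- Let 0 < α₂ < 1/2 and α₁ = 1 − 2α₂, and let ν be the probability measure on ((√2−1)², (√2+1)²) with density √((x − (√2−1)²)((√2+1)² − x))/(2πx) · (α₁ + α₂·x). Then the moments m_k = ∫ x^k dν(x) satisfy: m₁ = 2(1+α₂), m₂ = 2(3+5α₂), m₃ = 2(11+23α₂), and m₄ = 2(45+107α₂). -/

import Mathlib

/-!
The factor `x` of `x ^ (k + 1)` cancels the `1 / x` of the density; as `(√2 ± 1) ^ 2 = 3 ± 2√2`,
the moment `m_(k+1)` is `(2π)⁻¹` times the integral of the polynomial `g x = (α₁ + α₂ x) x ^ k`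
against the semicircle weight `√(8 - (x - 3) ^ 2)`. For a weight `√(r ^ 2 - u ^ 2)` with
`r ^ 2 = 2 s ^ 2`, three-point Gauss quadrature with nodes `-s, 0, s` and weights `1, 2, 1` is
exact up to degree `5`: the substitution `u = r cos θ` gives
`∫ u ^ n √(r ^ 2 - u ^ 2) = r ^ (n + 2) / (n + 2) · ∫₀^π cos θ ^ n`.
Hence `m_(k+1) = (g 1 + 2 g 3 + g 5) / 2` for `k ≤ 4`.
-/

open MeasureTheory Set

/-- The probability measure on `((√2-1)², (√2+1)²)` with density
`√((x - (√2-1)²)((√2+1)² - x))/(2πx) · (α₁ + α₂·x)`, where `α₁ = 1 - 2α₂`.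
It is the law of `X⁻¹` for `X ~ σ_{α₁,α₂}`. -/
noncomputable def nuMeasure (α₂ : ℝ) : Measure ℝ :=
  MeasureTheory.volume.withDensity
    (fun x => ENNReal.ofReal
      ((Set.Ioo ((Real.sqrt 2 - 1) ^ 2) ((Real.sqrt 2 + 1) ^ 2)).indicator
        (fun x =>
          Real.sqrt ((x - (Real.sqrt 2 - 1) ^ 2) * ((Real.sqrt 2 + 1) ^ 2 - x)) /
              (2 * Real.pi * x) * ((1 - 2 * α₂) + α₂ * x)) x))

open Real Polynomial

lemma integral_cos_pow_add_two_zero_pi (n : ℕ) :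
    ∫ θ in 0..π, cos θ ^ (n + 2) = (n + 1) / (n + 2) * ∫ θ in 0..π, cos θ ^ n := by
  simp [integral_cos_pow]

lemma integral_pow_mul_sqrt_sq_sub_sq {r : ℝ} (hr : 0 ≤ r) (n : ℕ) :
    ∫ u in -r..r, u ^ n * √(r ^ 2 - u ^ 2) = r ^ (n + 2) / (n + 2) * ∫ θ in 0..π, cos θ ^ n := by
  have hsubst := intervalIntegral.integral_comp_mul_deriv (a := 0) (b := π)
    (f := fun θ => r * cos θ) (f' := fun θ => -(r * sin θ)) (g := fun u => u ^ n * √(r ^ 2 - u ^ 2))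
    (fun θ _ => by simpa using (hasDerivAt_cos θ).const_mul r) (by fun_prop) (by fun_prop)
  have hpointwise : ∀ θ ∈ uIcc 0 π, ((fun u => u ^ n * √(r ^ 2 - u ^ 2)) ∘ fun θ => r * cos θ) θ
      * -(r * sin θ) = -(r ^ (n + 2) * (cos θ ^ n - cos θ ^ (n + 2))) := by
    intro θ hθ
    rw [uIcc_of_le pi_pos.le] at hθ
    have hsin : 0 ≤ sin θ := sin_nonneg_of_nonneg_of_le_pi hθ.1 hθ.2
    have : r ^ 2 - (r * cos θ) ^ 2 = (r * sin θ) ^ 2 := by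
      linear_combination (-r ^ 2) * sin_sq_add_cos_sq θ
    simp only [Function.comp, this, sqrt_sq (mul_nonneg hr hsin)]
    linear_combination (-r ^ (n + 2) * cos θ ^ n) * sin_sq_add_cos_sq θ
  rw [intervalIntegral.integral_congr hpointwise, intervalIntegral.integral_neg,
    intervalIntegral.integral_const_mul, intervalIntegral.integral_sub
      ((by fun_prop : Continuous fun θ => cos θ ^ n).intervalIntegrable _ _)
      ((by fun_prop : Continuous fun θ => cos θ ^ (n + 2)).intervalIntegrable _ _),
    integral_cos_pow_add_two_zero_pi] at hsubst
  simp only [cos_zero, mul_one, cos_pi, mul_neg] at hsubst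
  rw [intervalIntegral.integral_symm, ← hsubst]
  field_simp
  ring

lemma integral_eval_mul_sqrt_sq_sub_sq {r s : ℝ} (hr : 0 ≤ r) (hrs : r ^ 2 = 2 * s ^ 2)
    {p : ℝ[X]} (hp : p.natDegree ≤ 5) :
    ∫ u in -r..r, p.eval u * √(r ^ 2 - u ^ 2)
      = π * s ^ 2 / 4 * (p.eval (-s) + 2 * p.eval 0 + p.eval s) := by
  have hp6 : p.natDegree < 6 := by omega
  have hterm : ∀ i ∈ Finset.range 6, IntervalIntegrable
      (fun u => p.coeff i * u ^ i * √(r ^ 2 - u ^ 2)) volume (-r) r :=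
    fun i _ => (by fun_prop : Continuous _).intervalIntegrable _ _
  simp_rw [eval_eq_sum_range' hp6, Finset.sum_mul]
  rw [intervalIntegral.integral_finsetSum hterm]
  simp_rw [mul_assoc, intervalIntegral.integral_const_mul, integral_pow_mul_sqrt_sq_sub_sq hr]
  simp only [Finset.sum_range_succ, Finset.sum_range_zero, integral_cos_pow_add_two_zero_pi,
    pow_zero, pow_one, intervalIntegral.integral_const, integral_cos, sin_pi, sin_zero, sub_self,
    smul_eq_mul, mul_zero, sub_zero, mul_one]
  rw [show r ^ 4 = (r ^ 2) ^ 2 by ring, show r ^ 6 = (r ^ 2) ^ 3 by ring, hrs]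
  ring

lemma integral_eval_mul_sqrt_sq_sub_sub_sq {r s : ℝ} (hr : 0 ≤ r) (hrs : r ^ 2 = 2 * s ^ 2)
    {p : ℝ[X]} (hp : p.natDegree ≤ 5) (c : ℝ) :
    ∫ x in c - r..c + r, p.eval x * √(r ^ 2 - (x - c) ^ 2)
      = π * s ^ 2 / 4 * (p.eval (c - s) + 2 * p.eval c + p.eval (c + s)) := by
  have hq : (p.comp (X + C c)).natDegree ≤ 5 := by
    rw [natDegree_comp, natDegree_X_add_C, mul_one]
    exact hp
  have hcentered := integral_eval_mul_sqrt_sq_sub_sq hr hrs hq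
  have hshift := intervalIntegral.integral_comp_add_right (a := -r) (b := r)
    (fun x => p.eval x * √(r ^ 2 - (x - c) ^ 2)) c
  simp only [eval_comp, eval_add, eval_X, eval_C, add_sub_cancel_right] at hcentered hshift
  rw [neg_add_eq_sub, add_comm r c] at hshift
  rw [← hshift, hcentered, neg_add_eq_sub, zero_add, add_comm s c]

lemma integral_withDensity_ofReal_indicator {α E : Type*} [MeasurableSpace α]
    [NormedAddCommGroup E] [NormedSpace ℝ E] {μ : Measure α} {s : Set α} (hs : MeasurableSet s)
    {ρ : α → ℝ} (hρ : Measurable ρ) (hρ_nonneg : ∀ x ∈ s, 0 ≤ ρ x) (f : α → E) :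
    ∫ x, f x ∂μ.withDensity (fun x => ENNReal.ofReal (s.indicator ρ x)) =
      ∫ x in s, ρ x • f x ∂μ := by
  rw [integral_withDensity_eq_integral_toReal_smul ((hρ.indicator hs).ennreal_ofReal)
    (ae_of_all _ fun _ => ENNReal.ofReal_lt_top), ← integral_indicator hs]
  congr 1 with x
  by_cases hx : x ∈ s <;> simp [hx, hρ_nonneg]

lemma integral_pow_succ_nuMeasure {α₂ : ℝ} (h0 : 0 ≤ α₂) (h12 : α₂ ≤ 1 / 2) (k : ℕ) :
    ∫ x, x ^ (k + 1) ∂nuMeasure α₂ = (2 * π)⁻¹ * ∫ x in 3 - 2 * √2..3 + 2 * √2,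
      ((1 - 2 * α₂) + α₂ * x) * x ^ k * √((2 * √2) ^ 2 - (x - 3) ^ 2) := by
  have h2 : √2 ^ 2 = 2 := sq_sqrt (by norm_num)
  have hlower : (√2 - 1) ^ 2 = 3 - 2 * √2 := by linear_combination h2
  have hupper : (√2 + 1) ^ 2 = 3 + 2 * √2 := by linear_combination h2
  have hlower_pos : 0 < 3 - 2 * √2 := by nlinarith [sqrt_nonneg 2]
  have hle : 3 - 2 * √2 ≤ 3 + 2 * √2 := by linarith [sqrt_nonneg 2]
  rw [nuMeasure, integral_withDensity_ofReal_indicator measurableSet_Ioo (by fun_prop)]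
  · rw [hlower, hupper, ← integral_Ioc_eq_integral_Ioo, ← intervalIntegral.integral_of_le hle,
      ← intervalIntegral.integral_const_mul]
    refine intervalIntegral.integral_congr fun x hx => ?_
    rw [uIcc_of_le hle] at hx
    have hx0 : 0 < x := hlower_pos.trans_le hx.1
    rw [show (x - (3 - 2 * √2)) * (3 + 2 * √2 - x) = (2 * √2) ^ 2 - (x - 3) ^ 2 by ring,
      smul_eq_mul]
    have hπ := pi_pos
    field_simp
    ring
  · intro x hx
    have hx0 : 0 < x := (sq_nonneg _).trans_lt hx.1
    have : 0 ≤ 1 - 2 * α₂ + α₂ * x := by nlinarith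
    positivity

lemma integral_pow_succ_nuMeasure_eq {α₂ : ℝ} (h0 : 0 ≤ α₂) (h12 : α₂ ≤ 1 / 2) {k : ℕ}
    (hk : k ≤ 4) :
    ∫ x, x ^ (k + 1) ∂nuMeasure α₂ =
      ((1 - α₂) + 2 * (1 + α₂) * 3 ^ k + (1 + 3 * α₂) * 5 ^ k) / 2 := by
  have hdeg : ((C (1 - 2 * α₂) + C α₂ * X) * X ^ k).natDegree ≤ 5 := by
    compute_degree
    omega
  have hquad := integral_eval_mul_sqrt_sq_sub_sub_sq (r := 2 * √2) (s := 2) (by positivity)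
    (by rw [mul_pow, sq_sqrt zero_le_two]; norm_num) hdeg 3
  simp only [eval_mul, eval_add, eval_C, eval_X, eval_pow] at hquad
  rw [integral_pow_succ_nuMeasure h0 h12, hquad]
  field_simp
  ring

/-- For `0 < α₂ < 1/2` and `α₁ = 1 - 2α₂`, the moments of `ν` satisfy
`m₁ = 2(1+α₂)`, `m₂ = 2(3+5α₂)`, `m₃ = 2(11+23α₂)`, `m₄ = 2(45+107α₂)`. -/
theorem nu_moments (α₂ : ℝ) (h0 : 0 < α₂) (h12 : α₂ < 1 / 2) :
    (∫ x : ℝ, x ∂(nuMeasure α₂)) = 2 * (1 + α₂) ∧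
    (∫ x : ℝ, x ^ 2 ∂(nuMeasure α₂)) = 2 * (3 + 5 * α₂) ∧
    (∫ x : ℝ, x ^ 3 ∂(nuMeasure α₂)) = 2 * (11 + 23 * α₂) ∧
    (∫ x : ℝ, x ^ 4 ∂(nuMeasure α₂)) = 2 * (45 + 107 * α₂) := by
  have hmoment := fun k (hk : k ≤ 4) => integral_pow_succ_nuMeasure_eq h0.le h12.le hk
  refine ⟨?_, ?_, ?_, ?_⟩
  · simpa using (hmoment 0 (by norm_num)).trans (by ring)
  · exact (hmoment 1 (by norm_num)).trans (by ring)
  · exact (hmoment 2 (by norm_num)).trans (by ring)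
  · exact (hmoment 3 (by norm_num)).trans (by ring)
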